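/- Let A_{n,k} satisfy A_{n,k} = (n/d)·A_{n-1,k} + (n + k - 1)·A_{n-1,k-1} with A_{0,0}=1 and A_{n,k}=0 unless 0 ≤ k ≤ n, where d > 0. Let T*_{n,k} satisfy T*_{n,k} = n·T*_{n-1,k} + (2n+k-1)·T*_{n-1,k-1} - (n-k+1)·T*_{n-1,k-2} with T*_{0,0}=1 and T*_{n,k}=0 unless 0 ≤ k ≤ n. Then for all n ≥ 1, the row-generating functions satisfy T*_n(x) = d^n·(1+x)^n·A_n(x/(d(1+x))). -/

import Mathlib

/-!
Compare coefficients. The coefficient of `X ^ k` on the right is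
`S n k = ∑ⱼ A n j * d ^ (n - j) * (n - j).choose (k - j)`. Expanding `A (n + 1) j` by its
recurrence, Pascal's rule turns the `(n + 1) / d` part into `(n + 1) * (S n k + S n (k - 1))`,
and the absorption identity `i * m.choose i = (m - i + 1) * m.choose (i - 1)` turns the other
part into `(n + k) * S n (k - 1) - (n - k + 2) * S n (k - 2)`. So `S` obeys the recurrence of
`T*` and has the same row `0`, hence `S = T*`.
-/

open Polynomial Finset

/-- Guarded by `0 ≤ i` because `i.toNat` sends every negative `i` to `0`. -/
def intChoose (m : ℕ) (i : ℤ) : ℕ := if 0 ≤ i then m.choose i.toNat else 0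

lemma intChoose_natCast (m s : ℕ) : intChoose m s = m.choose s := by
  simp [intChoose]

lemma intChoose_of_neg (m : ℕ) {i : ℤ} (h : i < 0) : intChoose m i = 0 := by
  simp [intChoose, not_le.mpr h]

lemma intChoose_of_lt (m : ℕ) {i : ℤ} (h : (m : ℤ) < i) : intChoose m i = 0 := by
  lift i to ℕ using by omega
  rw [intChoose_natCast, Nat.choose_eq_zero_of_lt (by omega)]

lemma intChoose_succ (m : ℕ) (i : ℤ) :
    intChoose (m + 1) i = intChoose m i + intChoose m (i - 1) := by
  rcases lt_trichotomy i 0 with h | rfl | h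
  · simp [intChoose_of_neg _ h, intChoose_of_neg _ (show i - 1 < 0 by omega)]
  · simp [intChoose]
  · obtain ⟨s, rfl⟩ : ∃ s : ℕ, i = s + 1 := ⟨(i - 1).toNat, by omega⟩
    rw [add_sub_cancel_right, ← Nat.cast_add_one, intChoose_natCast, intChoose_natCast,
      intChoose_natCast, Nat.choose_succ_succ', add_comm]

lemma mul_intChoose (m : ℕ) (i : ℤ) :
    i * intChoose m i = (m - i + 1) * intChoose m (i - 1) := by
  rcases lt_trichotomy i 0 with h | rfl | h
  · simp [intChoose_of_neg _ h, intChoose_of_neg _ (show i - 1 < 0 by omega)]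
  · simp [intChoose_of_neg]
  · obtain ⟨s, rfl⟩ : ∃ s : ℕ, i = s + 1 := ⟨(i - 1).toNat, by omega⟩
    rw [add_sub_cancel_right]
    rcases le_or_gt s m with hs | hs
    · have := Nat.choose_succ_right_eq m s
      rw [← Nat.cast_add_one, intChoose_natCast, intChoose_natCast]
      zify [hs] at this
      push_cast
      linear_combination this
    · rw [intChoose_of_lt _ (by omega), intChoose_natCast, Nat.choose_eq_zero_of_lt hs]
      simp

section CommRing
variable {K : Type*} [CommRing K]

lemma coeff_X_pow_mul_one_add_X_pow (k r m : ℕ) :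
    (X ^ k * (1 + X) ^ r : K[X]).coeff m = intChoose r (m - k : ℤ) := by
  rw [mul_comm, coeff_mul_X_pow']
  split_ifs with h
  · rw [coeff_one_add_X_pow, ← Nat.cast_sub h, intChoose_natCast]
  · rw [intChoose_of_neg _ (by omega), Nat.cast_zero]

lemma coeff_sum_C_mul_X_pow {n : ℕ} {f : ℤ → K} (hf : ∀ k : ℤ, (n : ℤ) < k → f k = 0)
    (m : ℕ) :
    (∑ k ∈ range (n + 1), C (f k) * X ^ k).coeff m = f m := by
  simp only [finsetSum_coeff, coeff_C_mul_X_pow, sum_ite_eq, mem_range]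
  split_ifs with h
  · rfl
  · exact (hf m (by omega)).symm

def lambertTransform (d : K) (A : ℕ → ℤ → K) (n : ℕ) (k : ℤ) : K :=
  ∑ j ∈ range (n + 1), A n j * d ^ (n - j) * intChoose (n - j) (k - j)

variable (d : K) (A : ℕ → ℤ → K)

lemma coeff_sum_mul_one_add_X_pow (n m : ℕ) :
    (∑ k ∈ range (n + 1), C (A n k * d ^ (n - k)) * X ^ k * (1 + X) ^ (n - k)).coeff m =
      lambertTransform d A n m := by
  rw [lambertTransform]
  simp only [finsetSum_coeff, mul_assoc, coeff_C_mul, coeff_X_pow_mul_one_add_X_pow]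

lemma lambertTransform_of_neg {n : ℕ} {k : ℤ} (hk : k < 0) : lambertTransform d A n k = 0 :=
  sum_eq_zero fun j _ ↦ by rw [intChoose_of_neg _ (by omega), Nat.cast_zero, mul_zero]

lemma lambertTransform_of_lt {n : ℕ} {k : ℤ} (hk : (n : ℤ) < k) :
    lambertTransform d A n k = 0 :=
  sum_eq_zero fun j hj ↦ by
    rw [mem_range] at hj
    rw [intChoose_of_lt _ (by omega), Nat.cast_zero, mul_zero]

lemma lambertTransform_zero_zero : lambertTransform d A 0 0 = A 0 0 := by
  simp [lambertTransform, intChoose]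

variable {d A}

lemma lambertTransform_absorption_sum (n : ℕ) (k : ℤ) (hA : A n (-1) = 0) :
    ∑ j ∈ range (n + 2),
        (n + j : K) * A n (j - 1) * d ^ (n + 1 - j) * intChoose (n + 1 - j) (k - j) =
      (n + k) * lambertTransform d A n (k - 1) - (n - k + 2) * lambertTransform d A n (k - 2) := by
  rw [sum_range_succ', lambertTransform, lambertTransform, mul_sum, mul_sum, ← sum_sub_distrib]
  simp only [Nat.cast_zero, zero_sub, hA, mul_zero, zero_mul, add_zero]
  refine sum_congr rfl fun i hi ↦ ?_
  rw [mem_range] at hi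
  have habsorb := congrArg (Int.cast : ℤ → K) (mul_intChoose (n - i) (k - 1 - i))
  rw [show k - 1 - i - 1 = k - 2 - i by ring] at habsorb
  push_cast [Nat.cast_sub (Nat.le_of_lt_succ hi)] at habsorb ⊢
  rw [add_sub_cancel_right, ← sub_sub, sub_right_comm k]
  linear_combination (-(A n i * d ^ (n - i))) * habsorb

end CommRing

section Field
variable {K : Type*} [Field K] {d : K} {A : ℕ → ℤ → K}

lemma lambertTransform_pascal_sum (hd : d ≠ 0) (n : ℕ) (k : ℤ) (hA : A n (n + 1) = 0) :
    ∑ j ∈ range (n + 2), (n + 1) / d * A n j * d ^ (n + 1 - j) * intChoose (n + 1 - j) (k - j) =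
      (n + 1) * (lambertTransform d A n k + lambertTransform d A n (k - 1)) := by
  rw [sum_range_succ, Nat.cast_succ, hA, lambertTransform, lambertTransform, ← sum_add_distrib,
    mul_sum]
  simp only [mul_zero, zero_mul, add_zero]
  refine sum_congr rfl fun j hj ↦ ?_
  rw [mem_range] at hj
  rw [show n + 1 - j = n - j + 1 by omega, intChoose_succ, pow_succ, sub_right_comm k 1]
  field_simp
  push_cast
  ring

lemma lambertTransform_succ (hd : d ≠ 0) (n : ℕ) (hA_neg : A n (-1) = 0)
    (hA_top : A n (n + 1) = 0)
    (hArec : ∀ k : ℤ, A (n + 1) k = ((n + 1) / d) * A n k + (n + 1 + k - 1) * A n (k - 1))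
    (k : ℤ) :
    lambertTransform d A (n + 1) k =
      (n + 1) * lambertTransform d A n k + (2 * (n + 1) + k - 1) * lambertTransform d A n (k - 1) -
        (n + 1 - k + 1) * lambertTransform d A n (k - 2) := by
  have hsplit : lambertTransform d A (n + 1) k =
      ∑ j ∈ range (n + 2),
        (n + 1) / d * A n j * d ^ (n + 1 - j) * intChoose (n + 1 - j) (k - j) +
      ∑ j ∈ range (n + 2), (n + j : K) * A n (j - 1) * d ^ (n + 1 - j) *
        intChoose (n + 1 - j) (k - j) := by
    rw [lambertTransform, ← sum_add_distrib]
    refine sum_congr rfl fun j _ ↦ ?_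
    rw [hArec]
    push_cast
    ring
  rw [hsplit, lambertTransform_pascal_sum hd n k hA_top, lambertTransform_absorption_sum n k hA_neg]
  ring

end Field

theorem lambert_transformation
    (d : ℝ) (hd : 0 < d)
    (A Tstar : ℕ → ℤ → ℝ)
    (hA0 : A 0 0 = 1)
    (hAb : ∀ (n : ℕ) (k : ℤ), (k < 0 ∨ (n : ℤ) < k) → A n k = 0)
    (hArec : ∀ (n : ℕ) (k : ℤ),
      A (n + 1) k =
        (((n : ℝ) + 1) / d) * A n k + ((n : ℝ) + 1 + (k : ℝ) - 1) * A n (k - 1))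
    (hT0 : Tstar 0 0 = 1)
    (hTb : ∀ (n : ℕ) (k : ℤ), (k < 0 ∨ (n : ℤ) < k) → Tstar n k = 0)
    (hTrec : ∀ (n : ℕ) (k : ℤ),
      Tstar (n + 1) k =
        ((n : ℝ) + 1) * Tstar n k + (2 * ((n : ℝ) + 1) + (k : ℝ) - 1) * Tstar n (k - 1) -
          ((n : ℝ) + 1 - (k : ℝ) + 1) * Tstar n (k - 2)) :
    ∀ n : ℕ, 1 ≤ n →
      (∑ k ∈ Finset.range (n + 1), C (Tstar n (k : ℤ)) * X ^ k) =
        ∑ k ∈ Finset.range (n + 1),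
          C (A n (k : ℤ) * d ^ (n - k)) * X ^ k * (1 + X) ^ (n - k) := by
  have hTstar : ∀ n, Tstar n = lambertTransform d A n := by
    intro n
    induction n with
    | zero =>
      funext k
      rcases lt_trichotomy k 0 with hk | rfl | hk
      · rw [hTb 0 k (.inl hk), lambertTransform_of_neg d A hk]
      · rw [hT0, lambertTransform_zero_zero, hA0]
      · rw [hTb 0 k (.inr hk), lambertTransform_of_lt d A hk]
    | succ n ih =>
      funext k
      rw [hTrec, lambertTransform_succ hd.ne' n (hAb n _ (.inl (by norm_num)))
        (hAb n _ (.inr (by omega))) (hArec n), ih]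
  intro n _
  ext m
  rw [coeff_sum_C_mul_X_pow (fun k hk ↦ hTb n k (.inr hk)), coeff_sum_mul_one_add_X_pow, hTstar]
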